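/- On ℝ⁶ = ℝ³ × ℝ³ with the degenerate Poisson structure given by block structure matrix diag(A_x, A_y) (the product Lie–Poisson structure of 𝔰𝔬(3)* × 𝔰𝔬(3)*), the four diagonal-SO(3) invariants |x|², |y|², ⟨x,y⟩, |x×y|² pairwise Poisson-commute: all brackets between them vanish. -/

import Mathlib

open Matrix
open scoped BigOperators

/-- Gradient in the `x`-variables of `f : ℝ³ × ℝ³ → ℝ`. -/
noncomputable def gradx (f : (Fin 3 → ℝ) × (Fin 3 → ℝ) → ℝ)
    (p : (Fin 3 → ℝ) × (Fin 3 → ℝ)) : Fin 3 → ℝ :=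
  fun i => fderiv ℝ f p (Pi.single i 1, 0)

/-- Gradient in the `y`-variables of `f : ℝ³ × ℝ³ → ℝ`. -/
noncomputable def grady (f : (Fin 3 → ℝ) × (Fin 3 → ℝ) → ℝ)
    (p : (Fin 3 → ℝ) × (Fin 3 → ℝ)) : Fin 3 → ℝ :=
  fun i => fderiv ℝ f p (0, Pi.single i 1)

/-- The product Lie–Poisson bracket on ℝ⁶ ≅ 𝔰𝔬(3)* × 𝔰𝔬(3)*, with structure matrix
`diag(A_x, A_y)`: `{f,g}(x,y) = ⟨x, D_x g × D_x f⟩ + ⟨y, D_y g × D_y f⟩`. -/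
noncomputable def lpb (f g : (Fin 3 → ℝ) × (Fin 3 → ℝ) → ℝ)
    (p : (Fin 3 → ℝ) × (Fin 3 → ℝ)) : ℝ :=
  p.1 ⬝ᵥ crossProduct (gradx g p) (gradx f p) + p.2 ⬝ᵥ crossProduct (grady g p) (grady f p)

section Aux

local notation "E" => ((Fin 3 → ℝ) × (Fin 3 → ℝ))

/-- Coordinate projection onto the `i`-th `x`-coordinate, as a continuous linear map. -/
noncomputable def XX (i : Fin 3) : E →L[ℝ] ℝ :=
  (ContinuousLinearMap.proj i).comp (ContinuousLinearMap.fst ℝ (Fin 3 → ℝ) (Fin 3 → ℝ))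

/-- Coordinate projection onto the `i`-th `y`-coordinate, as a continuous linear map. -/
noncomputable def YY (i : Fin 3) : E →L[ℝ] ℝ :=
  (ContinuousLinearMap.proj i).comp (ContinuousLinearMap.snd ℝ (Fin 3 → ℝ) (Fin 3 → ℝ))

lemma hX (i : Fin 3) (p : E) : HasFDerivAt (fun q : E => q.1 i) (XX i) p := (XX i).hasFDerivAt

lemma hY (i : Fin 3) (p : E) : HasFDerivAt (fun q : E => q.2 i) (YY i) p := (YY i).hasFDerivAt

lemma grad1 (p : E) : gradx (fun q : E => q.1 ⬝ᵥ q.1) p = (fun i => 2 * p.1 i)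
    ∧ grady (fun q : E => q.1 ⬝ᵥ q.1) p = 0 := by
  have h : HasFDerivAt (fun q : E => q.1 ⬝ᵥ q.1)
      (∑ i : Fin 3, (p.1 i • XX i + p.1 i • XX i)) p := by
    have := HasFDerivAt.fun_sum (fun i (_ : i ∈ Finset.univ) => (hX i p).fun_mul (hX i p))
    simpa [dotProduct] using this
  constructor <;> funext i <;> simp only [gradx, grady, h.fderiv] <;>
    simp [XX, Pi.single_apply, Finset.sum_add_distrib, Finset.sum_ite_eq', two_mul]

lemma grad2 (p : E) : gradx (fun q : E => q.2 ⬝ᵥ q.2) p = 0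
    ∧ grady (fun q : E => q.2 ⬝ᵥ q.2) p = (fun i => 2 * p.2 i) := by
  have h : HasFDerivAt (fun q : E => q.2 ⬝ᵥ q.2)
      (∑ i : Fin 3, (p.2 i • YY i + p.2 i • YY i)) p := by
    have := HasFDerivAt.fun_sum (fun i (_ : i ∈ Finset.univ) => (hY i p).fun_mul (hY i p))
    simpa [dotProduct] using this
  constructor <;> funext i <;> simp only [gradx, grady, h.fderiv] <;>
    simp [YY, Pi.single_apply, Finset.sum_add_distrib, Finset.sum_ite_eq', two_mul]

lemma grad3 (p : E) : gradx (fun q : E => q.1 ⬝ᵥ q.2) p = p.2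
    ∧ grady (fun q : E => q.1 ⬝ᵥ q.2) p = p.1 := by
  have h : HasFDerivAt (fun q : E => q.1 ⬝ᵥ q.2)
      (∑ i : Fin 3, (p.1 i • YY i + p.2 i • XX i)) p := by
    have := HasFDerivAt.fun_sum (fun i (_ : i ∈ Finset.univ) => (hX i p).fun_mul (hY i p))
    simpa [dotProduct] using this
  constructor <;> funext i <;> simp only [gradx, grady, h.fderiv] <;>
    simp [XX, YY, Pi.single_apply, mul_ite, ite_mul, Finset.sum_ite_eq']

lemma grad4 (p : E) :
    gradx (fun q : E => crossProduct q.1 q.2 ⬝ᵥ crossProduct q.1 q.2) p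
      = (fun i => 2 * crossProduct p.2 (crossProduct p.1 p.2) i)
    ∧ grady (fun q : E => crossProduct q.1 q.2 ⬝ᵥ crossProduct q.1 q.2) p
      = (fun i => 2 * crossProduct (crossProduct p.1 p.2) p.1 i) := by
  have hc0 := ((hX 1 p).fun_mul (hY 2 p)).fun_sub ((hX 2 p).fun_mul (hY 1 p))
  have hc1 := ((hX 2 p).fun_mul (hY 0 p)).fun_sub ((hX 0 p).fun_mul (hY 2 p))
  have hc2 := ((hX 0 p).fun_mul (hY 1 p)).fun_sub ((hX 1 p).fun_mul (hY 0 p))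
  have h := ((hc0.fun_mul hc0).fun_add (hc1.fun_mul hc1)).fun_add (hc2.fun_mul hc2)
  have hfun : (fun q : E => crossProduct q.1 q.2 ⬝ᵥ crossProduct q.1 q.2)
      = (fun q : E =>
          (q.1 1 * q.2 2 - q.1 2 * q.2 1) * (q.1 1 * q.2 2 - q.1 2 * q.2 1)
          + (q.1 2 * q.2 0 - q.1 0 * q.2 2) * (q.1 2 * q.2 0 - q.1 0 * q.2 2)
          + (q.1 0 * q.2 1 - q.1 1 * q.2 0) * (q.1 0 * q.2 1 - q.1 1 * q.2 0)) := by
    funext q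
    simp [dotProduct, cross_apply, Fin.sum_univ_three]
  constructor <;> funext i <;> simp only [gradx, grady, hfun, h.fderiv] <;> fin_cases i <;>
    simp [XX, YY, cross_apply, Pi.single_apply] <;> ring

end Aux

/-- The four invariants `|x|²`, `|y|²`, `⟨x,y⟩`, `|x×y|²` of the diagonal SO(3)-action
pairwise Poisson-commute for the product Lie–Poisson structure. -/
theorem invariants_pairwise_commute :
    ∀ f ∈ ({fun p => p.1 ⬝ᵥ p.1, fun p => p.2 ⬝ᵥ p.2, fun p => p.1 ⬝ᵥ p.2,
            fun p => crossProduct p.1 p.2 ⬝ᵥ crossProduct p.1 p.2} :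
          Set ((Fin 3 → ℝ) × (Fin 3 → ℝ) → ℝ)),
      ∀ g ∈ ({fun p => p.1 ⬝ᵥ p.1, fun p => p.2 ⬝ᵥ p.2, fun p => p.1 ⬝ᵥ p.2,
            fun p => crossProduct p.1 p.2 ⬝ᵥ crossProduct p.1 p.2} :
          Set ((Fin 3 → ℝ) × (Fin 3 → ℝ) → ℝ)),
        ∀ p, lpb f g p = 0 := by
  intro f hf g hg p
  simp only [Set.mem_insert_iff, Set.mem_singleton_iff] at hf hg
  rcases hf with rfl | rfl | rfl | rfl <;> rcases hg with rfl | rfl | rfl | rfl <;>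
    simp only [lpb, (grad1 p).1, (grad1 p).2, (grad2 p).1, (grad2 p).2,
      (grad3 p).1, (grad3 p).2, (grad4 p).1, (grad4 p).2] <;>
    simp [cross_apply, dotProduct, Fin.sum_univ_three] <;> ring
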